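/- arXiv:2211.09642 — 2 statements merged into one kernel-verified Lean document; each statement's English description precedes it below -/
import Mathlib

section
/- Let G = (V,E,A) be a signed directed graph and let Θ = (ξ, q) be signage-model parameters with ξ : S×S → [0,1] and q ∈ [0,1]. Define Θ' = (ξ', q') by ξ'_{RR} = ξ_{AA}, ξ'_{AA} = ξ_{RR}, ξ'_{RA} = ξ_{AR}, ξ'_{AR} = ξ_{RA}, and q' = 1 − q. Then the likelihoods coincide: L(Θ) = L(Θ'). -/
open Finset

/-- Probability of an edge of sign `s` (`true` = `+`) between group labels
`x`, `y` (`true` = activator `A`, `false` = repressor `R`):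
`P⁺_{x,y} = ξ x y`, `P⁻_{x,y} = 1 - ξ x y`. -/
def pSign (ξ : Bool → Bool → ℝ) (s : Bool) (x y : Bool) : ℝ :=
  if s then ξ x y else 1 - ξ x y

/-- `P(𝒜 | Θ, C)`: product over the edges of the edge-sign probabilities. -/
def likCond {V : Type*} [DecidableEq V] (ξ : Bool → Bool → ℝ) (E : Finset (V × V))
    (sgn : V × V → Bool) (C : V → Bool) : ℝ :=
  ∏ e ∈ E, pSign ξ (sgn e) (C e.1) (C e.2)

/-- `P(C) = q^{#activators} (1-q)^{#repressors}`. -/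
def prior {V : Type*} [Fintype V] (q : ℝ) (C : V → Bool) : ℝ :=
  q ^ (univ.filter (fun v => C v = true)).card *
    (1 - q) ^ (univ.filter (fun v => C v = false)).card

/-- The total likelihood `L(Θ) = Σ_C P(𝒜|Θ,C) ⬝ P(C)`. -/
def lik {V : Type*} [Fintype V] [DecidableEq V] (ξ : Bool → Bool → ℝ) (q : ℝ)
    (E : Finset (V × V)) (sgn : V × V → Bool) : ℝ :=
  ∑ C : V → Bool, likCond ξ E sgn C * prior q C

/-- Problem-space symmetry: swapping the roles of activators and repressors in
`ξ` and replacing `q` by `1 - q` leaves the total likelihood unchanged. -/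
theorem stmt_0 {V : Type*} [Fintype V] [DecidableEq V]
    (E : Finset (V × V)) (sgn : V × V → Bool)
    (ξ ξ' : Bool → Bool → ℝ) (q : ℝ)
    (hξ : ∀ x y, ξ x y ∈ Set.Icc (0 : ℝ) 1) (hq : q ∈ Set.Icc (0 : ℝ) 1)
    (hswap : ∀ x y, ξ' x y = ξ (!x) (!y)) :
    lik ξ q E sgn = lik ξ' (1 - q) E sgn := by
  unfold lik
  refine Fintype.sum_equiv
    (⟨fun C v => !C v, fun C v => !C v,
      fun C => by funext v; simp, fun C => by funext v; simp⟩) _ _ (fun C => ?_)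
  simp only [Equiv.coe_fn_mk]
  congr 1
  · unfold likCond pSign
    refine Finset.prod_congr rfl fun e _ => ?_
    rw [hswap]
    simp
  · unfold prior
    rw [mul_comm, sub_sub_cancel]
    congr 2 <;> · apply Finset.card_bij (fun v _ => v) <;> simp
end

section
/- Let G = (V,E,A) be a signed directed graph, Θ = (ξ, q) parameters, and Θ' = (ξ', 1−q) the swapped parameters with ξ'_{XY} = ξ_{X̄Ȳ} for all X,Y ∈ S (where Ā = R and R̄ = A). For any node assignment C : V → S, let C' be its complement, C'(v) = C̄(v) for every v. Then P(A|Θ,C) · P(C) = P(A|Θ',C') · P(C'), where P(C) is computed with parameter q and P(C') with parameter 1−q. -/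
open Finset

/-- Termwise symmetry: an assignment `C` contributes to `L(Θ)` exactly what its
complement `C'` contributes to `L(Θ')`, where `Θ'` swaps the group labels in
`ξ` and replaces `q` by `1 - q`. -/
theorem stmt_1 {V : Type*} [Fintype V] [DecidableEq V]
    (E : Finset (V × V)) (sgn : V × V → Bool)
    (ξ ξ' : Bool → Bool → ℝ) (q : ℝ)
    (hξ : ∀ x y, ξ x y ∈ Set.Icc (0 : ℝ) 1) (hq : q ∈ Set.Icc (0 : ℝ) 1)
    (hswap : ∀ x y, ξ' x y = ξ (!x) (!y))
    (C : V → Bool) :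
    likCond ξ E sgn C * prior q C =
      likCond ξ' E sgn (fun v => !(C v)) * prior (1 - q) (fun v => !(C v)) := by
  have h1 : likCond ξ E sgn C = likCond ξ' E sgn (fun v => !(C v)) := by
    unfold likCond pSign
    refine Finset.prod_congr rfl fun e _ => ?_
    simp [hswap]
  have h2 : prior q C = prior (1 - q) (fun v => !(C v)) := by
    unfold prior
    have e1 : (univ.filter (fun v => (!(C v)) = true)) = (univ.filter (fun v => C v = false)) := by
      apply Finset.filter_congr; intro v _; simp
    have e2 : (univ.filter (fun v => (!(C v)) = false)) = (univ.filter (fun v => C v = true)) := by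
      apply Finset.filter_congr; intro v _; simp
    rw [e1, e2]; ring
  rw [h1, h2]
end
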